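/- arXiv:1903.02012 — 4 statements merged into one kernel-verified Lean document; each statement's English description precedes it below -/
import Mathlib

section
/- Let V = ℂ^d with standard basis e_1,…,e_d, let G ≤ S_d, and let S = Σ_{g∈G} e_{g(1)}⊗e_{g(2)}⊗⋯⊗e_{g(d)} ∈ V^{⊗d} be the molecule. Then the submodel generated by the GHZ tensor GHZ = Σ_j e_j⊗e_j⊗e_j, the transposition R = Σ_{i,j} e_i⊗e_j⊗e_i⊗e_j, and S equals the full group-action model: for every n ≥ 0, the n-th subspace of the generated submodel is exactly P^G_n = {x ∈ V^{⊗n} : g·x = x for all g ∈ G}. -/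
noncomputable section

attribute [local instance] Fintype.ofFinite

/-- `Tens d n` is `V^{⊗n}` for `V = ℂ^d`, realized via multi-index coordinates:
`e_{i_1} ⊗ ⋯ ⊗ e_{i_n}` is the indicator function of the multi-index `(i_1, …, i_n)`.
In particular `Tens d 0 ≅ ℂ`. -/
abbrev Tens (d n : ℕ) := (Fin n → Fin d) → ℂ

/-- The basic tensor `e_{i_1} ⊗ ⋯ ⊗ e_{i_n}`. -/
def basicT {d n : ℕ} (i : Fin n → Fin d) : Tens d n :=
  fun j => if j = i then 1 else 0

/-- The diagonal action of `g ∈ S_d` on `V^{⊗n}`, determined by `g · e_i = e_{g(i)}`. -/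
def spinAct {d n : ℕ} (g : Equiv.Perm (Fin d)) (x : Tens d n) : Tens d n :=
  fun j => x (fun k => g⁻¹ (j k))

/-- Permutation of tensor factors `π(σ)`. -/
def permFactors {d n : ℕ} (σ : Equiv.Perm (Fin n)) (x : Tens d n) : Tens d n :=
  fun j => x (j ∘ σ)

/-- Tensor product of tensors. -/
def tensMul {d n m : ℕ} (x : Tens d n) (y : Tens d m) : Tens d (n + m) :=
  fun j => x (fun k => j (Fin.castAdd m k)) * y (fun k => j (Fin.natAdd n k))

/-- Contraction `C_{k,k+1} : V^{⊗(n+2)} → V^{⊗n}` of two adjacent tensor factors. -/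
def contrT {d n : ℕ} (k : Fin (n + 1)) (x : Tens d (n + 2)) : Tens d n :=
  fun j => ∑ i : Fin d, x ((k.castSucc).insertNth i (k.insertNth i j))

/-- The GHZ tensor `Σ_j e_j ⊗ e_j ⊗ e_j`. -/
def ghz (d : ℕ) : Tens d 3 := ∑ i : Fin d, basicT (fun _ => i)

/-- The transposition tensor `R = Σ_{i,j} e_i ⊗ e_j ⊗ e_i ⊗ e_j`. -/
def transpositionR (d : ℕ) : Tens d 4 :=
  ∑ i : Fin d, ∑ j : Fin d, basicT ![i, j, i, j]

/-- The molecule `S = Σ_{g ∈ G} e_{g(1)} ⊗ e_{g(2)} ⊗ ⋯ ⊗ e_{g(d)} ∈ V^{⊗d}`. -/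
def molecule {d : ℕ} (G : Subgroup (Equiv.Perm (Fin d))) : Tens d d :=
  ∑ g : G, basicT (fun k => (g : Equiv.Perm (Fin d)) k)

/-- A family of linear subspaces `Q n ⊆ V^{⊗n}` is a *submodel* if `Q 0 = ℂ` and the
family is closed under tensor products, all adjacent contractions `C_{k,k+1}`, and all
permutations of tensor factors. -/
structure IsSubmodel (d : ℕ) (Q : ∀ n : ℕ, Submodule ℂ (Tens d n)) : Prop where
  zero_top : Q 0 = ⊤
  tens_mem : ∀ {n m : ℕ} (x : Tens d n) (y : Tens d m),
    x ∈ Q n → y ∈ Q m → tensMul x y ∈ Q (n + m)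
  contr_mem : ∀ {n : ℕ} (k : Fin (n + 1)) (x : Tens d (n + 2)),
    x ∈ Q (n + 2) → contrT k x ∈ Q n
  perm_mem : ∀ {n : ℕ} (σ : Equiv.Perm (Fin n)) (x : Tens d n),
    x ∈ Q n → permFactors σ x ∈ Q n

/-!
Every `G`-invariant tensor is a linear combination of the orbit sums `Σ_{g ∈ G} e_{g ∘ a}` over
multi-indices `a : Fin n → Fin d`, and the invariant tensors themselves form a submodel containing
the three generators. So it suffices to produce every orbit sum inside an arbitrary submodel `Q`
containing GHZ and `S`. Contracting GHZ once gives the all-ones vector; contracting the last factor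
of an orbit sum against it deletes the last index of `a`, and contracting it against GHZ duplicates
that index. If `a` is injective, its orbit sum comes from a permutation of `S` by deleting indices;
if not, permuting factors brings two equal indices to the end, and the orbit sum arises by
duplication from a shorter one.
-/

lemma Fin.comp_insertNth {α β : Type*} {n : ℕ} (f : α → β) (p : Fin (n + 1)) (a : α)
    (q : Fin n → α) : f ∘ (p.insertNth a q : Fin (n + 1) → α) = p.insertNth (f a) (f ∘ q) :=
  (Fin.insertNth_eq_iff.2 ⟨by simp, by ext; simp [Fin.removeNth]⟩).symm

lemma Fin.insertNth_castSucc_snoc {α : Type*} {n : ℕ} (p : Fin (n + 1)) (a b : α)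
    (f : Fin n → α) :
    (p.castSucc.insertNth a (Fin.snoc f b) : Fin (n + 2) → α) = Fin.snoc (p.insertNth a f) b := by
  rw [Fin.insertNth_eq_iff]
  refine ⟨by simp, funext fun t => ?_⟩
  induction t using Fin.lastCases with
  | last => simp [Fin.removeNth]
  | cast t =>
    simp only [Fin.removeNth, Fin.snoc_castSucc]
    rw [Fin.castSucc_succAbove_castSucc]
    simp

section Action
variable {d n : ℕ}

lemma spinAct_add (g : Equiv.Perm (Fin d)) (x y : Tens d n) :
    spinAct g (x + y) = spinAct g x + spinAct g y := rfl

lemma spinAct_smul (g : Equiv.Perm (Fin d)) (c : ℂ) (x : Tens d n) :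
    spinAct g (c • x) = c • spinAct g x := rfl

lemma spinAct_sum {ι : Type*} (s : Finset ι) (g : Equiv.Perm (Fin d)) (f : ι → Tens d n) :
    spinAct g (∑ a ∈ s, f a) = ∑ a ∈ s, spinAct g (f a) := by
  funext j
  simp [spinAct, Finset.sum_apply]

lemma spinAct_basicT (g : Equiv.Perm (Fin d)) (i : Fin n → Fin d) :
    spinAct g (basicT i) = basicT (fun k => g (i k)) := by
  funext j
  simp only [spinAct, basicT, funext_iff, Equiv.Perm.inv_eq_iff_eq]

lemma spinAct_tensMul {m : ℕ} (g : Equiv.Perm (Fin d)) (x : Tens d n) (y : Tens d m) :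
    spinAct g (tensMul x y) = tensMul (spinAct g x) (spinAct g y) := rfl

lemma spinAct_permFactors (g : Equiv.Perm (Fin d)) (σ : Equiv.Perm (Fin n)) (x : Tens d n) :
    spinAct g (permFactors σ x) = permFactors σ (spinAct g x) := rfl

lemma spinAct_contrT (g : Equiv.Perm (Fin d)) (k : Fin (n + 1)) (x : Tens d (n + 2)) :
    spinAct g (contrT k x) = contrT k (spinAct g x) := by
  funext j
  refine Fintype.sum_equiv g _ _ fun i => congrArg x ?_
  change _ = ⇑g⁻¹ ∘ _
  rw [Fin.comp_insertNth, Fin.comp_insertNth]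
  simp [Function.comp_def]

lemma sum_smul_basicT (x : Tens d n) : ∑ j, x j • basicT j = x := by
  funext j
  simp [basicT, Finset.sum_apply]

end Action

section GroupActionModel
variable {d : ℕ} (G : Subgroup (Equiv.Perm (Fin d)))

def groupActionModel (n : ℕ) : Submodule ℂ (Tens d n) where
  carrier := {x | ∀ g ∈ G, spinAct g x = x}
  add_mem' hx hy g hg := by rw [spinAct_add, hx g hg, hy g hg]
  zero_mem' _ _ := rfl
  smul_mem' c x hx g hg := by rw [spinAct_smul, hx g hg]

lemma isSubmodel_groupActionModel : IsSubmodel d (groupActionModel G) where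
  zero_top := eq_top_iff.2 fun x _ g _ => funext fun j => congrArg x (Subsingleton.elim _ _)
  tens_mem x y hx hy g hg := by rw [spinAct_tensMul, hx g hg, hy g hg]
  contr_mem k x hx g hg := by rw [spinAct_contrT, hx g hg]
  perm_mem σ x hx g hg := by rw [spinAct_permFactors, hx g hg]

lemma ghz_mem_groupActionModel : ghz d ∈ groupActionModel G 3 := fun g _ => by
  rw [ghz, spinAct_sum]
  exact Fintype.sum_equiv g _ _ fun i => spinAct_basicT g _

lemma transpositionR_mem_groupActionModel : transpositionR d ∈ groupActionModel G 4 := by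
  intro g _
  rw [transpositionR, spinAct_sum]
  refine Fintype.sum_equiv g _ _ fun i => ?_
  rw [spinAct_sum]
  refine Fintype.sum_equiv g _ _ fun j => ?_
  rw [spinAct_basicT]
  congr 1
  funext t
  fin_cases t <;> rfl

lemma molecule_mem_groupActionModel : molecule G ∈ groupActionModel G d := fun g hg => by
  rw [molecule, spinAct_sum]
  refine Fintype.sum_equiv (Equiv.mulLeft (⟨g, hg⟩ : G)) _ _ fun h => ?_
  rw [spinAct_basicT]
  rfl

end GroupActionModel

section Contraction
variable {d n m : ℕ}

lemma tensMul_apply_append (x : Tens d n) (y : Tens d m) (p : Fin n → Fin d)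
    (q : Fin m → Fin d) : tensMul x y (Fin.append p q) = x p * y q := by
  simp [tensMul]

lemma contrT_last_apply (x : Tens d (n + 2)) (j : Fin n → Fin d) :
    contrT (Fin.last n) x j = ∑ i, x (Fin.snoc (Fin.snoc j i) i) := by
  simp only [contrT, Fin.insertNth_last', Fin.insertNth_castSucc_snoc]

lemma contrT_last_tensMul_apply (x : Tens d (n + 1)) (y : Tens d 1) (j : Fin n → Fin d) :
    contrT (Fin.last n) (tensMul x y : Tens d (n + 1 + 1)) j =
      ∑ i, x (Fin.snoc j i) * y (fun _ => i) := by
  refine (contrT_last_apply _ j).trans (Finset.sum_congr rfl fun i _ => ?_)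
  rw [← tensMul_apply_append, Fin.append_right_eq_snoc]

/-- The contraction joins the last factor of `x` to the first factor of `y`. -/
lemma contrT_tensMul_apply_snoc_snoc (x : Tens d (n + 1)) (y : Tens d 3) (j : Fin n → Fin d)
    (u v : Fin d) :
    contrT (Fin.last n).castSucc.castSucc (tensMul x y : Tens d (n + 1 + 3))
        (Fin.snoc (Fin.snoc j u) v) =
      ∑ i, x (Fin.snoc j i) * y ![i, u, v] := by
  have vec_eq_snoc (i : Fin d) : ![i, u, v] = Fin.snoc (Fin.snoc (Fin.snoc Fin.elim0 i) u) v := by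
    ext t; fin_cases t <;> rfl
  simp only [contrT, Fin.insertNth_castSucc_snoc, Fin.insertNth_last']
  refine Finset.sum_congr rfl fun i _ => ?_
  rw [vec_eq_snoc, ← tensMul_apply_append, Fin.append_snoc, Fin.append_snoc,
    Fin.append_right_eq_snoc]
  rfl

lemma ghz_apply (a b c : Fin d) : ghz d ![a, b, c] = if a = b ∧ b = c then 1 else 0 := by
  have vec_eq_const (i : Fin d) : (![a, b, c] = fun _ => i) ↔ (a = i ∧ b = i ∧ c = i) := by
    simp [funext_iff, Fin.forall_fin_succ]
  simp only [ghz, basicT, Finset.sum_apply, vec_eq_const, ite_and, Finset.sum_ite_eq,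
    Finset.mem_univ, if_true]
  grind

lemma contrT_last_ghz : contrT (Fin.last 1) (ghz d) = fun _ => 1 := by
  funext j
  rw [contrT_last_apply, show j = ![j 0] by ext t; fin_cases t; rfl]
  simp [ghz_apply]

end Contraction

section OrbitSum
variable {d n : ℕ} (G : Subgroup (Equiv.Perm (Fin d)))

def orbitSum (a : Fin n → Fin d) : Tens d n :=
  ∑ g : G, basicT (fun k => (g : Equiv.Perm (Fin d)) (a k))

lemma molecule_eq_orbitSum : molecule G = orbitSum G (fun k => k) := rfl

lemma orbitSum_apply (a j : Fin n → Fin d) :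
    orbitSum G a j = ∑ g : G, if j = (g : Equiv.Perm (Fin d)) ∘ a then 1 else 0 := by
  simp only [orbitSum, Finset.sum_apply]
  rfl

lemma permFactors_orbitSum (σ : Equiv.Perm (Fin n)) (a : Fin n → Fin d) :
    permFactors σ (orbitSum G a) = orbitSum G (a ∘ ⇑σ⁻¹) := by
  funext j
  simp only [permFactors, orbitSum_apply]
  refine Finset.sum_congr rfl fun g _ => if_congr ?_ rfl rfl
  rw [Equiv.Perm.coe_inv, ← Function.comp_assoc, Equiv.eq_comp_symm]

lemma sum_orbitSum_snoc (a : Fin (n + 1) → Fin d) (j : Fin n → Fin d) :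
    ∑ i, orbitSum G a (Fin.snoc j i) = orbitSum G (Fin.init a) j := by
  simp only [orbitSum_apply]
  rw [Finset.sum_comm]
  refine Finset.sum_congr rfl fun g _ => ?_
  rw [← Fin.snoc_init_self a, Fin.comp_snoc, Fin.init_snoc]
  simp [Fin.snoc_inj, ite_and]

lemma orbitSum_snoc_last_apply (a : Fin (n + 1) → Fin d) (j : Fin n → Fin d) (u v : Fin d) :
    orbitSum G (Fin.snoc a (a (Fin.last n))) (Fin.snoc (Fin.snoc j u) v) =
      if u = v then orbitSum G a (Fin.snoc j u) else 0 := by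
  have last_eq {g : Equiv.Perm (Fin d)} (h : Fin.snoc j u = g ∘ a) : g (a (Fin.last n)) = u := by
    simpa using (congrFun h (Fin.last n)).symm
  simp only [orbitSum_apply, Fin.comp_snoc, Fin.snoc_inj]
  split_ifs with huv
  · subst huv
    exact Finset.sum_congr rfl fun g _ =>
      if_congr ⟨And.left, fun h => ⟨h, (last_eq h).symm⟩⟩ rfl rfl
  · exact Finset.sum_eq_zero fun g _ => if_neg fun h => huv (h.2.trans (last_eq h.1)).symm

lemma card_smul_eq_sum_orbitSum {x : Tens d n} (hx : x ∈ groupActionModel G n) :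
    Fintype.card G • x = ∑ j, x j • orbitSum G j := by
  calc Fintype.card G • x = ∑ g : G, spinAct (g : Equiv.Perm (Fin d)) x := by
        simp [fun g : G => hx g g.2]
    _ = ∑ g : G, ∑ j, x j • basicT (fun k => (g : Equiv.Perm (Fin d)) (j k)) := by
        refine Finset.sum_congr rfl fun g _ => ?_
        conv_lhs => rw [← sum_smul_basicT x]
        simp only [spinAct_sum, spinAct_smul, spinAct_basicT]
    _ = ∑ j, x j • orbitSum G j := by
        rw [Finset.sum_comm]
        simp only [orbitSum, Finset.smul_sum]

end OrbitSum

namespace IsSubmodel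
variable {d : ℕ} {G : Subgroup (Equiv.Perm (Fin d))} {Q : ∀ n : ℕ, Submodule ℂ (Tens d n)}

lemma ones_mem (hQ : IsSubmodel d Q) (hghz : ghz d ∈ Q 3) : (fun _ => 1 : Tens d 1) ∈ Q 1 :=
  contrT_last_ghz (d := d) ▸ hQ.contr_mem _ _ hghz

lemma orbitSum_comp_perm_mem (hQ : IsSubmodel d Q) {n : ℕ} {a : Fin n → Fin d}
    (ha : orbitSum G a ∈ Q n) (σ : Equiv.Perm (Fin n)) : orbitSum G (a ∘ σ) ∈ Q n := by
  simpa [permFactors_orbitSum] using hQ.perm_mem σ⁻¹ _ ha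

lemma orbitSum_init_mem (hQ : IsSubmodel d Q) (hghz : ghz d ∈ Q 3) {n : ℕ}
    {a : Fin (n + 1) → Fin d} (ha : orbitSum G a ∈ Q (n + 1)) :
    orbitSum G (Fin.init a) ∈ Q n := by
  convert hQ.contr_mem (Fin.last n) (tensMul (orbitSum G a) (fun _ => 1) : Tens d (n + 1 + 1))
    (hQ.tens_mem _ _ ha (hQ.ones_mem hghz)) using 1
  funext j
  rw [contrT_last_tensMul_apply]
  simp [sum_orbitSum_snoc]

lemma orbitSum_snoc_last_mem (hQ : IsSubmodel d Q) (hghz : ghz d ∈ Q 3) {n : ℕ}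
    {a : Fin (n + 1) → Fin d} (ha : orbitSum G a ∈ Q (n + 1)) :
    orbitSum G (Fin.snoc a (a (Fin.last n))) ∈ Q (n + 2) := by
  convert hQ.contr_mem (Fin.last n).castSucc.castSucc
    (tensMul (orbitSum G a) (ghz d) : Tens d (n + 1 + 3)) (hQ.tens_mem _ _ ha hghz) using 1
  funext j
  rw [← Fin.snoc_init_self j, ← Fin.snoc_init_self (Fin.init j), contrT_tensMul_apply_snoc_snoc,
    orbitSum_snoc_last_apply]
  simp [ghz_apply, ite_and]

lemma orbitSum_comp_castLE_mem (hQ : IsSubmodel d Q) (hghz : ghz d ∈ Q 3) {m n : ℕ}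
    (h : m ≤ n) {a : Fin n → Fin d} (ha : orbitSum G a ∈ Q n) :
    orbitSum G (a ∘ Fin.castLE h) ∈ Q m := by
  induction n, h using Nat.le_induction with
  | base => simpa using ha
  | succ n hmn ih => exact ih (hQ.orbitSum_init_mem hghz ha)

lemma orbitSum_mem_of_injective (hQ : IsSubmodel d Q) (hghz : ghz d ∈ Q 3)
    (hmol : molecule G ∈ Q d) {n : ℕ} {a : Fin n → Fin d} (ha : Function.Injective a) :
    orbitSum G a ∈ Q n := by
  have hn : n ≤ d := by simpa using Fintype.card_le_of_injective a ha
  obtain ⟨σ, hσ⟩ := Equiv.Perm.exists_extending_pair _ _ (Fin.castLE_injective hn) ha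
  have hσ_mem : orbitSum G σ ∈ Q d :=
    hQ.orbitSum_comp_perm_mem (molecule_eq_orbitSum G ▸ hmol) σ
  simpa [Function.comp_def, hσ] using hQ.orbitSum_comp_castLE_mem hghz hn hσ_mem

lemma orbitSum_mem (hQ : IsSubmodel d Q) (hghz : ghz d ∈ Q 3) (hmol : molecule G ∈ Q d)
    (n : ℕ) (a : Fin n → Fin d) : orbitSum G a ∈ Q n := by
  induction n with
  | zero => exact hQ.zero_top ▸ Submodule.mem_top
  | succ n ih =>
    by_cases ha : Function.Injective a
    · exact hQ.orbitSum_mem_of_injective hghz hmol ha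
    obtain ⟨i, i', hii', hne⟩ : ∃ i i', a i = a i' ∧ i ≠ i' := by
      simpa [Function.Injective] using ha
    obtain _ | m := n
    · exact absurd (Subsingleton.elim (α := Fin 1) i i') hne
    have hlast : (Fin.last m).castSucc ≠ Fin.last (m + 1) := (Fin.castSucc_lt_last _).ne
    obtain ⟨σ, hσ⟩ := Equiv.Perm.exists_extending_pair _ _
      (Function.Embedding.embFinTwo hlast).injective (Function.Embedding.embFinTwo hne).injective
    have hσa : (a ∘ σ) (Fin.last m).castSucc = (a ∘ σ) (Fin.last (m + 1)) :=
      (congrArg a (hσ 0)).trans (hii'.trans (congrArg a (hσ 1)).symm)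
    have hdup := hQ.orbitSum_snoc_last_mem hghz (ih (Fin.init (a ∘ σ)))
    rw [show Fin.init (a ∘ σ) (Fin.last m) = (a ∘ σ) (Fin.last (m + 1)) from hσa,
      Fin.snoc_init_self] at hdup
    simpa [Function.comp_assoc] using hQ.orbitSum_comp_perm_mem hdup σ⁻¹

theorem groupActionModel_le (hQ : IsSubmodel d Q) (hghz : ghz d ∈ Q 3)
    (hmol : molecule G ∈ Q d) (n : ℕ) : groupActionModel G n ≤ Q n := by
  intro x hx
  have hcard : (Fintype.card G : ℂ) ≠ 0 := Nat.cast_ne_zero.2 Fintype.card_ne_zero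
  rw [← inv_smul_smul₀ hcard x, Nat.cast_smul_eq_nsmul, card_smul_eq_sum_orbitSum G hx]
  exact Submodule.smul_mem _ _ (Submodule.sum_mem _ fun j _ =>
    Submodule.smul_mem _ _ (hQ.orbitSum_mem hghz hmol n j))

end IsSubmodel

/-- The submodel generated by the GHZ tensor, the transposition `R`,
and the molecule `S` is the full group-action model: for every `n`, a tensor
`x ∈ V^{⊗n}` lies in every submodel containing GHZ, `R` and `S` if and only if
`x` is fixed by every `g ∈ G`. -/
theorem submodel_generated_by_ghz_R_molecule (d : ℕ)
    (G : Subgroup (Equiv.Perm (Fin d))) (n : ℕ) (x : Tens d n) :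
    (∀ Q : ∀ m : ℕ, Submodule ℂ (Tens d m), IsSubmodel d Q →
      ghz d ∈ Q 3 → transpositionR d ∈ Q 4 → molecule G ∈ Q d → x ∈ Q n) ↔
    (∀ g ∈ G, spinAct g x = x) := by
  refine ⟨fun h => h _ (isSubmodel_groupActionModel G) (ghz_mem_groupActionModel G)
    (transpositionR_mem_groupActionModel G) (molecule_mem_groupActionModel G), ?_⟩
  intro hx Q hQ hghz _ hmol
  exact hQ.groupActionModel_le hghz hmol n hx
end
end

section
/- Let V = ℂ^d with d ≥ 2, standard basis e_1,…,e_d, let G ≤ S_d, and let S = Σ_{g∈G} e_{g(1)}⊗⋯⊗e_{g(d)} ∈ V^{⊗d}. Let ε : V → ℂ be ε(e_j) = 1. Then: (capped scalar) ε^{⊗d}(S) = |G|; and (Y-uncappable) for every σ ∈ S_d, the contraction of the first two tensor factors of π(σ)S vanishes: C_{1,2}(π(σ)S) = 0. -/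
noncomputable section

attribute [local instance] Fintype.ofFinite

/-- For `V = ℂ^d` with `d = n + 2 ≥ 2` and `G ≤ S_d`:
(capped scalar) applying the counit `ε(e_j) = 1` to all `d` legs of the molecule `S`
yields `|G|`, i.e. `ε^{⊗d}(S) = Σ_a S(a) = |G|`; and
(Y-uncappable) for every `σ ∈ S_d`, contracting the first two tensor factors of
`π(σ)S` gives zero: `C_{1,2}(π(σ)S) = 0`. -/
theorem molecule_capped_scalar_and_Y_uncappable (n : ℕ)
    (G : Subgroup (Equiv.Perm (Fin (n + 2)))) :
    (∑ a : Fin (n + 2) → Fin (n + 2), molecule G a = (Nat.card G : ℂ)) ∧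
    (∀ σ : Equiv.Perm (Fin (n + 2)),
      contrT (0 : Fin (n + 1)) (permFactors σ (molecule G)) = 0) := by
  constructor
  · calc ∑ a : Fin (n + 2) → Fin (n + 2), molecule G a
        = ∑ a : Fin (n + 2) → Fin (n + 2), ∑ g : G,
            basicT (fun k => (g : Equiv.Perm (Fin (n+2))) k) a := by
          simp [molecule, Finset.sum_apply]
      _ = ∑ g : G, ∑ a : Fin (n + 2) → Fin (n + 2),
            basicT (fun k => (g : Equiv.Perm (Fin (n+2))) k) a := Finset.sum_comm
      _ = ∑ _g : G, (1 : ℂ) := by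
          refine Finset.sum_congr rfl fun g _ => ?_
          simp [basicT]
      _ = (Nat.card G : ℂ) := by simp [Nat.card_eq_fintype_card]
  · intro σ
    funext j
    show (∑ i : Fin (n+2), permFactors σ (molecule G)
        (((0 : Fin (n+1)).castSucc).insertNth i ((0 : Fin (n+1)).insertNth i j))) = 0
    refine Finset.sum_eq_zero fun i _ => ?_
    simp only [permFactors, molecule, Finset.sum_apply, basicT]
    refine Finset.sum_eq_zero fun g _ => ?_
    rw [if_neg]
    intro hEq
    set h : Fin (n+2) → Fin (n+2) :=
      ((0 : Fin (n+1)).castSucc).insertNth i ((0 : Fin (n+1)).insertNth i j) with hh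
    have h0 : h 0 = i := by
      rw [hh]
      simp [Fin.insertNth_zero]
    have h1 : h 1 = i := by
      rw [hh]
      simp [Fin.castSucc_zero, Fin.insertNth_zero]
    have e0 := congrFun hEq (σ.symm 0)
    have e1 := congrFun hEq (σ.symm 1)
    simp only [Function.comp_apply, Equiv.apply_symm_apply] at e0 e1
    have : σ.symm 0 = σ.symm 1 := by
      apply (g : Equiv.Perm (Fin (n+2))).injective
      rw [← e0, ← e1, h0, h1]
    exact one_ne_zero (σ.symm.injective this).symm

end
end

section
/- Let Γ be the Petersen graph realized as the Kneser graph KG_{5,2}. The natural group homomorphism from S_5 to the automorphism group of Γ, sending g ∈ S_5 to the graph automorphism {a,b} ↦ {g(a),g(b)}, is an isomorphism; in particular, Aut(Γ) ≅ S_5. -/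
/-!
The stars `{v | a ∈ v}` are exactly the independent 4-sets of the Petersen graph (the
Erdős–Ko–Rado theorem for `KG_{5,2}`, a finite check). An automorphism therefore
permutes the five stars, and the induced permutation of `{1,…,5}` acts on the vertices as the
automorphism does. Conversely a permutation is recovered from where it sends the stars.
-/

noncomputable section

/-- Vertices of the Kneser graph `KG_{5,2}`: the 2-element subsets of `{1,…,5}`. -/
abbrev KVertex : Type := {s : Finset (Fin 5) // s.card = 2}

/-- The Petersen graph, realized as the Kneser graph `KG_{5,2}`:
two 2-element subsets are adjacent iff they are disjoint. -/
def petersen : SimpleGraph KVertex where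
  Adj u v := Disjoint u.1 v.1
  symm := ⟨fun _ _ h => h.symm⟩
  loopless := ⟨by
    intro v h
    have hv := v.2
    rw [disjoint_self.mp h] at hv
    simp at hv⟩

/-- The action of `S_5` on the vertices: `g • {a,b} = {g a, g b}`. -/
instance : SMul (Equiv.Perm (Fin 5)) KVertex :=
  ⟨fun g v => ⟨v.1.image g, by rw [Finset.card_image_of_injective _ g.injective]; exact v.2⟩⟩

instance : MulAction (Equiv.Perm (Fin 5)) KVertex where
  one_smul v := by
    apply Subtype.ext
    show v.1.image ⇑(1 : Equiv.Perm (Fin 5)) = v.1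
    simp
  mul_smul g h v := by
    apply Subtype.ext
    show v.1.image ⇑(g * h) = (v.1.image ⇑h).image ⇑g
    rw [Finset.image_image]
    rfl

/-- The natural map sending `g ∈ S_5` to the graph automorphism
`{a,b} ↦ {g(a), g(b)}` of the Petersen graph. -/
def toAut (g : Equiv.Perm (Fin 5)) : petersen ≃g petersen where
  toEquiv := MulAction.toPerm g
  map_rel_iff' := by
    intro u v
    show Disjoint (u.1.image ⇑g) (v.1.image ⇑g) ↔ Disjoint u.1 v.1
    exact Finset.disjoint_image g.injective

open Finset

theorem SimpleGraph.IsNIndepSet.map_iso {V W : Type*} {G : SimpleGraph V} {H : SimpleGraph W}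
    {n : ℕ} {s : Finset V} (hs : G.IsNIndepSet n s) (φ : G ≃g H) :
    H.IsNIndepSet n (s.map φ.toEquiv.toEmbedding) := by
  refine ⟨?_, by rw [card_map, hs.card_eq]⟩
  rintro _ hx' _ hy' hxy
  obtain ⟨x, hx, rfl⟩ := mem_map.1 hx'
  obtain ⟨y, hy, rfl⟩ := mem_map.1 hy'
  exact fun hadj => hs.isIndepSet hx hy (ne_of_apply_ne _ hxy) (φ.map_adj_iff.1 hadj)

instance : DecidableRel petersen.Adj := fun u v => inferInstanceAs (Decidable (Disjoint u.1 v.1))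

def kneserStar (a : Fin 5) : Finset KVertex := {v | a ∈ v.1}

theorem mem_kneserStar {a : Fin 5} {v : KVertex} : v ∈ kneserStar a ↔ a ∈ v.1 := by
  simp [kneserStar]

theorem kneserStar_injective : Function.Injective kneserStar := by decide

theorem petersen_isNIndepSet_four_iff {s : Finset KVertex} :
    petersen.IsNIndepSet 4 s ↔ ∃ a, s = kneserStar a := by
  revert s; decide +kernel

theorem exists_map_kneserStar_eq (φ : petersen ≃g petersen) (a : Fin 5) :
    ∃ b, (kneserStar a).map φ.toEquiv.toEmbedding = kneserStar b :=
  petersen_isNIndepSet_four_iff.1 ((petersen_isNIndepSet_four_iff.2 ⟨a, rfl⟩).map_iso φ)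

theorem toAut_apply_val (g : Equiv.Perm (Fin 5)) (v : KVertex) : (toAut g v).1 = v.1.image g :=
  rfl

theorem map_kneserStar_toAut (g : Equiv.Perm (Fin 5)) (a : Fin 5) :
    (kneserStar a).map (toAut g).toEquiv.toEmbedding = kneserStar (g a) := by
  ext v
  obtain ⟨u, rfl⟩ := (toAut g).surjective v
  rw [mem_kneserStar, toAut_apply_val, g.injective.mem_finset_image, ← mem_kneserStar]
  exact mem_map' (toAut g).toEquiv.toEmbedding

theorem toAut_mul (g h : Equiv.Perm (Fin 5)) : toAut (g * h) = (toAut g).comp (toAut h) :=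
  RelIso.ext fun v => mul_smul g h v

theorem toAut_injective : Function.Injective toAut := fun g h hgh =>
  Equiv.ext fun a => kneserStar_injective <| by
    rw [← map_kneserStar_toAut, ← map_kneserStar_toAut, hgh]

theorem toAut_surjective : Function.Surjective toAut := by
  intro φ
  choose σ hσ using exists_map_kneserStar_eq φ
  have hσ_inj : Function.Injective σ := fun a b hab =>
    kneserStar_injective <| map_injective φ.toEquiv.toEmbedding <| by rw [hσ, hσ, hab]
  set g := Equiv.ofBijective σ (Finite.injective_iff_bijective.1 hσ_inj)
  have hmem (a : Fin 5) (v : KVertex) : g a ∈ (φ v).1 ↔ a ∈ v.1 := by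
    rw [← mem_kneserStar, ← mem_kneserStar, Equiv.ofBijective_apply, ← hσ a]
    exact mem_map' φ.toEquiv.toEmbedding
  refine ⟨g, RelIso.ext fun v => Subtype.ext <| Finset.ext fun x => ?_⟩
  obtain ⟨a, rfl⟩ := g.surjective x
  rw [toAut_apply_val, g.injective.mem_finset_image, hmem]

/-- The natural group homomorphism `S_5 → Aut(Γ)` of the Petersen
graph, `g ↦ ({a,b} ↦ {g(a), g(b)})`, is multiplicative and bijective onto the group of
all graph automorphisms; in particular `Aut(Γ) ≅ S_5`. -/
theorem petersen_aut_eq_S5 :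
    (∀ g h : Equiv.Perm (Fin 5), toAut (g * h) = (toAut g).comp (toAut h)) ∧
    Function.Bijective toAut :=
  ⟨toAut_mul, toAut_injective, toAut_surjective⟩

end
end

section
/- Let Γ be the Petersen graph realized as the Kneser graph KG_{5,2}, let W = ℂ^{V(Γ)} ≅ ℂ^{10} with the S_5-action permuting the basis (e_v)_{v∈V(Γ)}, extended diagonally to W^{⊗4}. Then the space of S_5-invariant tensors P^{S_5}_4 = {x ∈ W^{⊗4} : g·x = x for all g ∈ S_5} has dimension 107; equivalently, the diagonal action of S_5 on V(Γ)^4 has exactly 107 orbits. -/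
noncomputable section

/-- `W^{⊗n}` for `W = ℂ^{V(Γ)} ≅ ℂ^{10}`, realized via multi-index coordinates. -/
abbrev TensK (n : ℕ) := (Fin n → KVertex) → ℂ

/-- The diagonal action of `g ∈ S_5` on `W^{⊗n}`: `g · e_v = e_{g•v}` on each factor. -/
def actK {n : ℕ} (g : Equiv.Perm (Fin 5)) (x : TensK n) : TensK n :=
  fun j => x (fun t => g⁻¹ • j t)

/-- The space `P^{S_5}_n = {x ∈ W^{⊗n} : g·x = x for all g ∈ S_5}`. -/
def PfixK (n : ℕ) : Submodule ℂ (TensK n) where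
  carrier := {x | ∀ g : Equiv.Perm (Fin 5), actK g x = x}
  add_mem' := by
    intro a b ha hb g
    show actK g (a + b) = a + b
    have h : actK g (a + b) = actK g a + actK g b := rfl
    rw [h, ha g, hb g]
  zero_mem' := by intro g; rfl
  smul_mem' := by
    intro c a ha g
    show actK g (c • a) = c • a
    have h : actK g (c • a) = c • actK g a := rfl
    rw [h, ha g]

-- Auxiliary material -------------------------------------------------------

abbrev QK (n : ℕ) :=
  MulAction.orbitRel.Quotient (Equiv.Perm (Fin 5)) (Fin n → KVertex)

/-- An invariant tensor is constant on orbits. -/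
lemma PfixK_const {n : ℕ} (x : PfixK n) (g : Equiv.Perm (Fin 5))
    (j : Fin n → KVertex) : x.1 (g • j) = x.1 j := by
  have h := congrFun (x.2 g) (g • j)
  have : (fun t => g⁻¹ • (g • j) t) = j := by
    funext t
    show g⁻¹ • (g • j t) = j t
    rw [inv_smul_smul]
  rw [actK, this] at h
  exact h.symm

/-- Invariant tensors correspond linearly to functions on the orbit space. -/
def pfixEquiv (n : ℕ) : PfixK n ≃ₗ[ℂ] (QK n → ℂ) where
  toFun x := Quotient.lift x.1 (by
    rintro a b ⟨g, rfl⟩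
    exact PfixK_const x g b)
  map_add' x y := by
    funext q
    induction q using Quotient.inductionOn with
    | h j => rfl
  map_smul' c x := by
    funext q
    induction q using Quotient.inductionOn with
    | h j => rfl
  invFun f := ⟨fun j => f ⟦j⟧, by
    intro g
    funext j
    show f ⟦fun t => g⁻¹ • j t⟧ = f ⟦j⟧
    apply congrArg f
    apply Quotient.sound
    exact ⟨g⁻¹, rfl⟩⟩
  left_inv x := by
    apply Subtype.ext
    funext j
    rfl
  right_inv f := by
    funext q
    induction q using Quotient.inductionOn with
    | h j => rfl

instance (g : Equiv.Perm (Fin 5)) :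
    Fintype (MulAction.fixedBy (Fin 4 → KVertex) g) :=
  Set.Finite.fintype (Set.toFinite _)

/-- Fixed tuples are tuples of fixed vertices. -/
def fixedByPiEquiv (g : Equiv.Perm (Fin 5)) :
    MulAction.fixedBy (Fin 4 → KVertex) g ≃ (Fin 4 → {v : KVertex // g • v = v}) where
  toFun x := fun t => ⟨x.1 t, congrFun x.2 t⟩
  invFun y := ⟨fun t => (y t).1, by
    funext t
    exact (y t).2⟩
  left_inv x := by apply Subtype.ext; rfl
  right_inv y := by funext t; apply Subtype.ext; rfl

set_option maxRecDepth 20000 in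
lemma burnside_sum :
    (∑ g : Equiv.Perm (Fin 5), (Fintype.card {v : KVertex // g • v = v})^4) = 12840 := by
  decide

/-- The space `P^{S_5}_4` of `S_5`-invariant tensors in `W^{⊗4}`
(for the Petersen graph) has dimension `107`; equivalently, the diagonal action of
`S_5` on `V(Γ)^4` has exactly `107` orbits. -/
theorem Pfix4_dim_107 :
    Module.finrank ℂ (PfixK 4) = 107 ∧
    Nat.card (MulAction.orbitRel.Quotient (Equiv.Perm (Fin 5)) (Fin 4 → KVertex))
      = 107 := by
  letI : Fintype (QK 4) := Fintype.ofFinite _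
  have hcardQ : Fintype.card (QK 4) = 107 := by
    have hb := MulAction.sum_card_fixedBy_eq_card_orbits_mul_card_group
      (Equiv.Perm (Fin 5)) (Fin 4 → KVertex)
    have hsum : (∑ g : Equiv.Perm (Fin 5),
        Fintype.card (MulAction.fixedBy (Fin 4 → KVertex) g)) = 12840 := by
      rw [← burnside_sum]
      apply Finset.sum_congr rfl
      intro g _
      rw [Fintype.card_congr (fixedByPiEquiv g), Fintype.card_fun]
      simp
    rw [hsum] at hb
    have hG : Fintype.card (Equiv.Perm (Fin 5)) = 120 := by
      rw [Fintype.card_perm]; decide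
    rw [hG] at hb
    have hb' : Fintype.card (QK 4) * 120 = 12840 := hb.symm
    omega
  constructor
  · rw [LinearEquiv.finrank_eq (pfixEquiv 4), Module.finrank_fintype_fun_eq_card, hcardQ]
  · rw [Nat.card_eq_fintype_card]
    exact hcardQ
end
end
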